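/- Let Θ be an inner function with values in L(E), let Θ̃(z) = Θ(z̄)*, and let τ be the unitary operator from K_Θ onto K_Θ̃ given by (τf)(e^{it}) = e^{-it} Θ(e^{-it})* f(e^{-it}). If f ∈ K_Θ̃ is orthogonal to D̃_* = {(1/z)(Θ̃(z) − Θ̃(0))x : x ∈ E}, then S_Θ S_Θ* (τ* f) = τ* f, where S_Θ is the compressed shift on K_Θ. -/

import Mathlib

open MeasureTheory Complex ContinuousLinearMap
open scoped ComplexInnerProductSpace

noncomputable section

/-- The circle `𝕋`, realized as `ℝ / 2πℤ`; the point `t` corresponds to `e^{it}`. -/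
abbrev Circle2pi : Type := AddCircle (2 * Real.pi)

instance : Fact (0 < 2 * Real.pi) := ⟨by positivity⟩

/-- Normalized Haar (arc-length) measure on the circle. -/
abbrev haarCircle2pi : Measure Circle2pi := AddCircle.haarAddCircle

variable {E : Type} [NormedAddCommGroup E] [InnerProductSpace ℂ E] [FiniteDimensional ℂ E]

/-- `Θ`, given by its boundary-value function on the circle, is an inner function: it is
(a.e. strongly) measurable, its boundary values are a.e. unitary operators on `E`, and its
Fourier coefficients of negative index vanish (the latter says exactly that `Θ` is the
boundary-value function of a bounded analytic `L(E)`-valued function on the unit disc,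
i.e. an element of `H^∞(L(E))`). -/
structure IsInner (Θ : Circle2pi → (E →L[ℂ] E)) : Prop where
  meas : AEStronglyMeasurable Θ haarCircle2pi
  unit : ∀ᵐ t ∂haarCircle2pi, Θ t ∈ unitary (E →L[ℂ] E)
  anal : ∀ n : ℤ, n < 0 → fourierCoeff Θ n = 0

/-- Membership in the Hardy space `H²(E)`, viewed as the subspace of `L²(E)` of functions
whose Fourier coefficients of negative index vanish. -/
def MemH2 (f : Lp E 2 haarCircle2pi) : Prop :=
  ∀ n : ℤ, n < 0 → fourierCoeff (⇑f) n = 0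

/-- Membership in the model space `K_Θ = H²(E) ⊖ Θ H²(E)`: `f` belongs to `H²(E)` and is
orthogonal to `Θ H²(E)`. -/
def MemK (Θ : Circle2pi → (E →L[ℂ] E)) (f : Lp E 2 haarCircle2pi) : Prop :=
  MemH2 f ∧ ∀ g : Lp E 2 haarCircle2pi, MemH2 g →
    ∫ t, ⟪f t, Θ t (g t)⟫ ∂haarCircle2pi = 0

/-- The boundary values of `Θ̃(z) = Θ(z̄)*`, namely `Θ̃(e^{it}) = Θ(e^{-it})*`. -/
def tild (Θ : Circle2pi → (E →L[ℂ] E)) : Circle2pi → (E →L[ℂ] E) :=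
  fun t => adjoint (Θ (-t))

/-- `τ` is the operator on `L²(E)` given by `(τ f)(e^{it}) = e^{-it} Θ(e^{-it})* f(e^{-it})`. -/
def IsTau (Θ : Circle2pi → (E →L[ℂ] E))
    (τ : Lp E 2 haarCircle2pi →L[ℂ] Lp E 2 haarCircle2pi) : Prop :=
  ∀ f : Lp E 2 haarCircle2pi,
    (⇑(τ f)) =ᵐ[haarCircle2pi] fun t => fourier (-1) t • (adjoint (Θ (-t))) (f (-t))

/-- `P` is the orthogonal projection of `L²(E)` onto the model space `K_Θ`:
its range lies in `K_Θ`, it fixes `K_Θ`, and `f - P f` is orthogonal to `K_Θ`. -/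
def IsProjK (Θ : Circle2pi → (E →L[ℂ] E))
    (P : Lp E 2 haarCircle2pi →L[ℂ] Lp E 2 haarCircle2pi) : Prop :=
  (∀ f, MemK Θ (P f)) ∧ (∀ f, MemK Θ f → P f = f) ∧
    ∀ f g, MemK Θ g → ⟪f - P f, g⟫ = 0

/-- `S` acts on the model space `K_Θ` as the compressed shift `S_Θ f = P_Θ (z f)`:
for `f ∈ K_Θ`, `S f ∈ K_Θ` and `S f - z f` is orthogonal to `K_Θ`, i.e.
`⟪S f, g⟫ = ⟪z f, g⟫` for all `g ∈ K_Θ`. -/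
def IsCompShift (Θ : Circle2pi → (E →L[ℂ] E))
    (S : Lp E 2 haarCircle2pi →L[ℂ] Lp E 2 haarCircle2pi) : Prop :=
  ∀ f, MemK Θ f → MemK Θ (S f) ∧
    ∀ g, MemK Θ g → ⟪S f, g⟫ = ∫ t, ⟪fourier 1 t • f t, g t⟫ ∂haarCircle2pi

/-- `A` acts on the model space `K_Θ` as the adjoint `S_Θ*` of the compressed shift `S`:
for `f ∈ K_Θ`, `A f ∈ K_Θ` and `⟪A f, g⟫ = ⟪f, S g⟫` for all `g ∈ K_Θ`. -/
def IsCompShiftAdj (Θ : Circle2pi → (E →L[ℂ] E))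
    (S A : Lp E 2 haarCircle2pi →L[ℂ] Lp E 2 haarCircle2pi) : Prop :=
  ∀ f, MemK Θ f → MemK Θ (A f) ∧ ∀ g, MemK Θ g → ⟪A f, g⟫ = ⟪f, S g⟫

/-- The subspace `D = {(I - Θ(z) Θ(0)*) x : x ∈ E}` of `K_Θ`, described through boundary
values; here `Θ(0)` is the 0-th Fourier coefficient of `Θ`. -/
def DSet (Θ : Circle2pi → (E →L[ℂ] E)) : Set (Lp E 2 haarCircle2pi) :=
  {f | ∃ x : E, (⇑f) =ᵐ[haarCircle2pi]
    fun t => x - Θ t (adjoint (fourierCoeff Θ 0) x)}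

/-- The subspace `D_* = {(1/z)(Θ(z) - Θ(0)) x : x ∈ E}` of `K_Θ`, described through
boundary values. -/
def DStarSet (Θ : Circle2pi → (E →L[ℂ] E)) : Set (Lp E 2 haarCircle2pi) :=
  {f | ∃ x : E, (⇑f) =ᵐ[haarCircle2pi]
    fun t => fourier (-1) t • (Θ t x - fourierCoeff Θ 0 x)}

/-- `A` is a matrix-valued truncated Toeplitz operator on `K_Θ`, i.e. `A ∈ T_Θ`: there is a
symbol `Φ ∈ L²(L(E))` such that `A f = P_Θ (Φ f)` for every `f` in
`K_Θ^∞ = K_Θ ∩ H^∞(E)`; the compression is expressed by: `A f ∈ K_Θ` and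
`⟪A f, g⟫ = ⟪Φ f, g⟫` for every `g ∈ K_Θ`. -/
def MemTT (Θ : Circle2pi → (E →L[ℂ] E))
    (A : Lp E 2 haarCircle2pi →L[ℂ] Lp E 2 haarCircle2pi) : Prop :=
  ∃ Φ : Circle2pi → (E →L[ℂ] E), MemLp Φ 2 haarCircle2pi ∧
    ∀ f, MemK Θ f → MemLp (⇑f) ⊤ haarCircle2pi →
      MemK Θ (A f) ∧ ∀ g, MemK Θ g → ⟪A f, g⟫ = ∫ t, ⟪Φ t (f t), g t⟫ ∂haarCircle2pi

/-! The adjoint `τ*` maps `K_Θ̃` into `K_Θ`: orthogonality to `Θ H²` is transported by `τ` to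
orthogonality of `f ∈ H²` against `τ (Θ h)(z) = z̄ h(z̄)`, whose Fourier coefficients of nonnegative
index vanish. Moreover `g = τ* f` has `ĝ(0) = 0`: for `x ∈ E`, `τ x = z̄ Θ̃ x` is the sum of
`z̄ (Θ̃ - Θ̃(0)) x ∈ D̃_*` and `z̄ Θ̃(0) x`, and `f ∈ H²` is orthogonal to both. Finally, when
`g ∈ K_Θ` has `ĝ(0) = 0`, `z̄ g` lies in `K_Θ`, so `S_Θ* g = z̄ g` and `S_Θ (z̄ g) = z (z̄ g) = g`. -/

section FourierSeries

variable {T : ℝ} {V : Type*} [NormedAddCommGroup V] [InnerProductSpace ℂ V]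

theorem fourier_apply_neg (n : ℤ) (t : AddCircle T) : fourier n (-t) = fourier (-n) t := by
  rw [fourier_apply, smul_neg, fourier_neg', ← fourier_neg]

variable [Fact (0 < T)]

theorem MeasureTheory.MemLp.fourier_smul {p : ENNReal} {f : AddCircle T → V}
    (hf : MemLp f p AddCircle.haarAddCircle) (n : ℤ) :
    MemLp (fun t => fourier n t • f t) p AddCircle.haarAddCircle :=
  hf.of_le ((map_continuous (fourier n)).aestronglyMeasurable.smul hf.1) <|
    ae_of_all _ fun t => by rw [norm_smul, fourier_apply, Circle.norm_coe, one_mul]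

theorem fourierCoeff_fourier_smul (m : ℤ) (f : AddCircle T → V) (n : ℤ) :
    fourierCoeff (fun t => fourier m t • f t) n = fourierCoeff f (n - m) := by
  rw [fourierCoeff, fourierCoeff, neg_sub, sub_eq_neg_add]
  simp only [smul_smul, ← fourier_add]

theorem fourierCoeff_comp_neg (f : AddCircle T → V) (n : ℤ) :
    fourierCoeff (fun t => f (-t)) n = fourierCoeff f (-n) := by
  simp only [fourierCoeff]
  rw [← integral_neg_eq_self]
  simp only [neg_neg, fourier_apply_neg]

def monomialLp (n : ℤ) (x : V) : Lp V 2 (AddCircle.haarAddCircle (T := T)) :=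
  ((memLp_const x).fourier_smul n).toLp _

theorem coeFn_monomialLp (n : ℤ) (x : V) :
    monomialLp (T := T) n x =ᵐ[AddCircle.haarAddCircle] fun t => fourier n t • x :=
  MemLp.coeFn_toLp _

def fourierSmulLp (n : ℤ) (u : Lp V 2 (AddCircle.haarAddCircle (T := T))) :
    Lp V 2 (AddCircle.haarAddCircle (T := T)) :=
  ((Lp.memLp u).fourier_smul n).toLp _

theorem coeFn_fourierSmulLp (n : ℤ) (u : Lp V 2 (AddCircle.haarAddCircle (T := T))) :
    fourierSmulLp n u =ᵐ[AddCircle.haarAddCircle] fun t => fourier n t • u t :=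
  MemLp.coeFn_toLp _

theorem fourierCoeff_fourierSmulLp (m : ℤ) (u : Lp V 2 (AddCircle.haarAddCircle (T := T)))
    (n : ℤ) : fourierCoeff (fourierSmulLp m u) n = fourierCoeff u (n - m) := by
  rw [fourierCoeff_congr_ae (coeFn_fourierSmulLp m u), fourierCoeff_fourier_smul]

theorem fourierCoeff.sub {f g : AddCircle T → V} (hf : Integrable f AddCircle.haarAddCircle)
    (hg : Integrable g AddCircle.haarAddCircle) :
    fourierCoeff (f - g) = fourierCoeff f - fourierCoeff g := by
  ext n
  simpa [fourierCoeff, smul_sub] using integral_sub (hf.fourier_smul (-n)) (hg.fourier_smul (-n))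

variable [CompleteSpace V]

theorem fourierCoeff_const (x : V) :
    fourierCoeff (fun _ : AddCircle T => x) = Pi.single 0 x := by
  ext n
  have h := congrFun (fourierCoeff_fourier (T := T) 0) n
  simp only [fourierCoeff, fourier_zero, smul_eq_mul, mul_one] at h
  rw [fourierCoeff, integral_smul_const, h]
  rcases eq_or_ne n 0 with rfl | hn
  · simp
  · simp [hn]

theorem fourierCoeff_monomialLp_of_ne {n k : ℤ} (hk : k ≠ n) (x : V) :
    fourierCoeff (monomialLp (T := T) n x) k = 0 := by
  rw [fourierCoeff_congr_ae (coeFn_monomialLp n x), fourierCoeff_fourier_smul,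
    fourierCoeff_const, Pi.single_eq_of_ne (sub_ne_zero.mpr hk)]

theorem fourierCoeff_inner (e : V) {f : AddCircle T → V}
    (hf : Integrable f AddCircle.haarAddCircle) (n : ℤ) :
    fourierCoeff (fun t => ⟪e, f t⟫) n = ⟪e, fourierCoeff f n⟫ := by
  rw [fourierCoeff, fourierCoeff, ← integral_inner (hf.fourier_smul (-n))]
  simp only [inner_smul_right, smul_eq_mul]

theorem inner_monomialLp (n : ℤ) (x : V) (u : Lp V 2 (AddCircle.haarAddCircle (T := T))) :
    ⟪monomialLp n x, u⟫ = ⟪x, fourierCoeff u n⟫ := by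
  rw [L2.inner_def, fourierCoeff,
    ← integral_inner (((Lp.memLp u).fourier_smul (-n)).integrable one_le_two)]
  refine integral_congr_ae ?_
  filter_upwards [coeFn_monomialLp n x] with t ht
  rw [ht, inner_smul_left, inner_smul_right, fourier_neg]

theorem fourierCoeff_eq_zero_of_forall_inner_monomialLp
    {u : Lp V 2 (AddCircle.haarAddCircle (T := T))} {n : ℤ}
    (h : ∀ x, ⟪monomialLp n x, u⟫ = 0) : fourierCoeff u n = 0 :=
  inner_self_eq_zero.mp <| (inner_monomialLp n _ u).symm.trans (h _)

theorem fourierCoeff_innerSL_compLp (e : V) (u : Lp V 2 (AddCircle.haarAddCircle (T := T)))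
    (n : ℤ) : fourierCoeff ((innerSL ℂ e).compLp u) n = ⟪e, fourierCoeff u n⟫ := by
  rw [fourierCoeff_congr_ae ((innerSL ℂ e).coeFn_compLp' u)]
  exact fourierCoeff_inner e ((Lp.memLp u).integrable one_le_two) n

end FourierSeries

theorem HilbertBasis.inner_eq_zero_of_repr_eq_zero_or {ι 𝕜 H : Type*} [RCLike 𝕜]
    [NormedAddCommGroup H] [InnerProductSpace 𝕜 H] (b : HilbertBasis ι 𝕜 H) {x y : H}
    (h : ∀ i, b.repr x i = 0 ∨ b.repr y i = 0) : inner 𝕜 x y = 0 := by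
  have hterm : ∀ i, inner 𝕜 x (b i) * inner 𝕜 (b i) y = 0 := fun i => by
    rw [← inner_conj_symm, ← b.repr_apply_apply, ← b.repr_apply_apply]
    rcases h i with h | h <;> simp [h]
  rw [← b.tsum_inner_mul_inner x y, tsum_congr hterm, tsum_zero]

theorem MeasureTheory.L2.inner_eq_sum_inner_innerSL_compLp {α V ι : Type*} [MeasurableSpace α]
    {μ : Measure α} [NormedAddCommGroup V] [InnerProductSpace ℂ V] [Fintype ι]
    (b : OrthonormalBasis ι ℂ V) (u v : Lp V 2 μ) :
    ⟪u, v⟫ = ∑ i, ⟪(innerSL ℂ (b i)).compLp u, (innerSL ℂ (b i)).compLp v⟫ := by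
  simp only [L2.inner_def]
  rw [← integral_finsetSum _ fun i _ => L2.integrable_inner _ _]
  refine integral_congr_ae ?_
  have hcomp : ∀ᵐ t ∂μ, ∀ i, (innerSL ℂ (b i)).compLp u t = ⟪b i, u t⟫ ∧
      (innerSL ℂ (b i)).compLp v t = ⟪b i, v t⟫ :=
    ae_all_iff.mpr fun i => by
      filter_upwards [(innerSL ℂ (b i)).coeFn_compLp u, (innerSL ℂ (b i)).coeFn_compLp v]
        with t hu hv using ⟨hu, hv⟩
  filter_upwards [hcomp] with t ht
  rw [← b.sum_inner_mul_inner]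
  refine Finset.sum_congr rfl fun i _ => ?_
  rw [(ht i).1, (ht i).2, RCLike.inner_apply, inner_conj_symm, mul_comm]

section NegInvariant

variable {G : Type*} [MeasurableSpace G] [Neg G] [MeasurableNeg G] {μ : Measure G}
  [μ.IsNegInvariant]

theorem MeasureTheory.ae_comp_neg {p : G → Prop} (h : ∀ᵐ t ∂μ, p t) :
    ∀ᵐ t ∂μ, p (-t) :=
  (Measure.measurePreserving_neg μ).quasiMeasurePreserving.ae h

theorem MeasureTheory.ae_eq_comp_neg {α : Type*} {u v : G → α} (h : u =ᵐ[μ] v) :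
    (fun t => u (-t)) =ᵐ[μ] fun t => v (-t) :=
  (Measure.measurePreserving_neg μ).quasiMeasurePreserving.ae_eq_comp h

end NegInvariant

section Orthogonality

variable {T : ℝ} [Fact (0 < T)] {V : Type*} [NormedAddCommGroup V] [InnerProductSpace ℂ V]
  [FiniteDimensional ℂ V]

theorem inner_eq_zero_of_fourierCoeff_eq_zero_or
    {u v : Lp V 2 (AddCircle.haarAddCircle (T := T))}
    (h : ∀ n, fourierCoeff u n = 0 ∨ fourierCoeff v n = 0) : ⟪u, v⟫ = 0 := by
  rw [L2.inner_eq_sum_inner_innerSL_compLp (stdOrthonormalBasis ℂ V)]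
  refine Finset.sum_eq_zero fun i _ => fourierBasis.inner_eq_zero_of_repr_eq_zero_or fun n => ?_
  simp only [fourierBasis_repr, fourierCoeff_innerSL_compLp]
  rcases h n with h | h <;> simp [h]

end Orthogonality

section ModelSpace

variable {V : Type} [NormedAddCommGroup V] [InnerProductSpace ℂ V]

theorem memH2_monomialLp [CompleteSpace V] {n : ℤ} (hn : 0 ≤ n) (x : V) :
    MemH2 (monomialLp n x) :=
  fun _ hk => fourierCoeff_monomialLp_of_ne (by omega) x

theorem MemH2.fourierSmulLp {m : ℤ} (hm : 0 ≤ m) {w : Lp V 2 haarCircle2pi} (hw : MemH2 w) :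
    MemH2 (fourierSmulLp m w) :=
  fun n hn => by rw [fourierCoeff_fourierSmulLp]; exact hw _ (by omega)

theorem MemH2.sub {a c : Lp V 2 haarCircle2pi} (ha : MemH2 a) (hc : MemH2 c) : MemH2 (a - c) :=
  fun n hn => by
    rw [fourierCoeff_congr_ae (Lp.coeFn_sub a c), fourierCoeff.sub
      ((Lp.memLp a).integrable one_le_two) ((Lp.memLp c).integrable one_le_two), Pi.sub_apply,
      ha n hn, hc n hn, sub_zero]

theorem memK_fourierSmulLp_neg_one {Θ : Circle2pi → (V →L[ℂ] V)} {g : Lp V 2 haarCircle2pi}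
    (hg : MemK Θ g) (hg0 : fourierCoeff g 0 = 0) : MemK Θ (fourierSmulLp (-1) g) := by
  refine ⟨fun n hn => ?_, fun w hw => ?_⟩
  · rw [fourierCoeff_fourierSmulLp]
    rcases (show n - -1 ≤ 0 by omega).eq_or_lt with h0 | hneg
    · rw [h0, hg0]
    · exact hg.1 _ hneg
  · rw [← hg.2 _ (hw.fourierSmulLp zero_le_one)]
    refine integral_congr_ae ?_
    filter_upwards [coeFn_fourierSmulLp (-1) g, coeFn_fourierSmulLp 1 w] with t hg' hw'
    rw [hg', hw', map_smul, inner_smul_left, inner_smul_right, ← fourier_neg, neg_neg]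

variable [FiniteDimensional ℂ V] {Θ : Circle2pi → (V →L[ℂ] V)}

theorem IsInner.memLp_apply (hΘ : IsInner Θ) {p : ENNReal} {g : Circle2pi → V}
    (hg : MemLp g p haarCircle2pi) : MemLp (fun t => Θ t (g t)) p haarCircle2pi :=
  hg.of_le
    ((ContinuousLinearMap.id ℂ (V →L[ℂ] V)).aestronglyMeasurable_comp₂ hΘ.meas hg.1)
    (hΘ.unit.mono fun t ht => (norm_map_of_mem_unitary ht (g t)).le)

theorem IsInner.integrable_inner_apply (hΘ : IsInner Θ) (a g : Lp V 2 haarCircle2pi) :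
    Integrable (fun t => ⟪a t, Θ t (g t)⟫) haarCircle2pi := by
  let hΘg := hΘ.memLp_apply (Lp.memLp g)
  refine (L2.integrable_inner (𝕜 := ℂ) a (hΘg.toLp _)).congr ?_
  filter_upwards [hΘg.coeFn_toLp] with t ht
  rw [ht]

theorem MemK.sub (hΘ : IsInner Θ) {a c : Lp V 2 haarCircle2pi} (ha : MemK Θ a) (hc : MemK Θ c) :
    MemK Θ (a - c) := by
  refine ⟨ha.1.sub hc.1, fun g hg => ?_⟩
  have hsub : (fun t => ⟪(a - c) t, Θ t (g t)⟫) =ᵐ[haarCircle2pi]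
      fun t => ⟪a t, Θ t (g t)⟫ - ⟪c t, Θ t (g t)⟫ := by
    filter_upwards [Lp.coeFn_sub a c] with t ht
    rw [ht, Pi.sub_apply, inner_sub_left]
  rw [integral_congr_ae hsub, integral_sub (hΘ.integrable_inner_apply a g)
    (hΘ.integrable_inner_apply c g), ha.2 g hg, hc.2 g hg, sub_zero]

theorem eq_of_memK_of_forall_inner_eq (hΘ : IsInner Θ) {a b : Lp V 2 haarCircle2pi}
    (ha : MemK Θ a) (hb : MemK Θ b) (h : ∀ d, MemK Θ d → ⟪a, d⟫ = ⟪b, d⟫) : a = b :=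
  sub_eq_zero.mp <| (inner_self_eq_zero (𝕜 := ℂ)).mp <| by
    rw [inner_sub_left, h _ (ha.sub hΘ hb), sub_self]

theorem IsCompShiftAdj.apply_eq {S A : Lp V 2 haarCircle2pi →L[ℂ] Lp V 2 haarCircle2pi}
    (hΘ : IsInner Θ) (hS : IsCompShift Θ S) (hA : IsCompShiftAdj Θ S A)
    {g h : Lp V 2 haarCircle2pi} (hg : MemK Θ g) (hh : MemK Θ h)
    (hhg : h =ᵐ[haarCircle2pi] fun t => fourier (-1) t • g t) : A g = h := by
  refine eq_of_memK_of_forall_inner_eq hΘ (hA g hg).1 hh fun d hd => ?_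
  rw [(hA g hg).2 d hd, ← inner_conj_symm, (hS d hd).2 g hg, ← integral_conj, L2.inner_def]
  refine integral_congr_ae ?_
  filter_upwards [hhg] with t ht
  rw [ht, inner_conj_symm, inner_smul_left, inner_smul_right, ← fourier_neg, neg_neg]

theorem IsCompShift.apply_eq {S : Lp V 2 haarCircle2pi →L[ℂ] Lp V 2 haarCircle2pi}
    (hΘ : IsInner Θ) (hS : IsCompShift Θ S) {g h : Lp V 2 haarCircle2pi}
    (hh : MemK Θ h) (hg : MemK Θ g) (hgh : g =ᵐ[haarCircle2pi] fun t => fourier 1 t • h t) :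
    S h = g := by
  refine eq_of_memK_of_forall_inner_eq hΘ (hS h hh).1 hg fun e he => ?_
  rw [(hS h hh).2 e he, L2.inner_def]
  refine integral_congr_ae ?_
  filter_upwards [hgh] with t ht
  rw [ht]

theorem compShift_compShiftAdj_apply_eq_self
    {S A : Lp V 2 haarCircle2pi →L[ℂ] Lp V 2 haarCircle2pi}
    (hΘ : IsInner Θ) (hS : IsCompShift Θ S) (hA : IsCompShiftAdj Θ S A)
    {g : Lp V 2 haarCircle2pi} (hg : MemK Θ g) (hg0 : fourierCoeff g 0 = 0) : S (A g) = g := by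
  have hzg := coeFn_fourierSmulLp (-1) g
  have hzgK := memK_fourierSmulLp_neg_one hg hg0
  rw [hA.apply_eq hΘ hS hg hzgK hzg]
  refine hS.apply_eq hΘ hzgK hg ?_
  filter_upwards [hzg] with t ht
  rw [ht, smul_smul, ← fourier_add, add_neg_cancel, fourier_zero, one_smul]

end ModelSpace

section Tau

variable {V : Type} [NormedAddCommGroup V] [InnerProductSpace ℂ V] [FiniteDimensional ℂ V]
  {Θ : Circle2pi → (V →L[ℂ] V)} {τ : Lp V 2 haarCircle2pi →L[ℂ] Lp V 2 haarCircle2pi}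

theorem IsTau.coeFn_apply_monomialLp (hτ : IsTau Θ τ) (n : ℤ) (x : V) :
    τ (monomialLp n x) =ᵐ[haarCircle2pi] fun t => tild Θ t (fourier (-(n + 1)) t • x) := by
  filter_upwards [hτ (monomialLp n x), ae_eq_comp_neg (coeFn_monomialLp n x)] with t hτt hm
  rw [hτt, hm, fourier_apply_neg, tild, map_smul, map_smul, smul_smul, ← fourier_add, neg_add']
  ring_nf

theorem IsTau.memH2_adjoint_apply (hτ : IsTau Θ τ) {f : Lp V 2 haarCircle2pi}
    (hf : MemK (tild Θ) f) : MemH2 (adjoint τ f) := fun n hn => by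
  refine fourierCoeff_eq_zero_of_forall_inner_monomialLp fun x => ?_
  rw [adjoint_inner_right, inner_eq_zero_symm, L2.inner_def,
    ← hf.2 _ (memH2_monomialLp (show 0 ≤ -(n + 1) by omega) x)]
  refine integral_congr_ae ?_
  filter_upwards [hτ.coeFn_apply_monomialLp n x, coeFn_monomialLp (-(n + 1)) x] with t hτt hm
  rw [hτt, hm]

theorem IsTau.apply_monomialLp_zero_sub_mem_dStarSet (hτ : IsTau Θ τ) (x : V) :
    τ (monomialLp 0 x) - monomialLp (-1) (fourierCoeff (tild Θ) 0 x) ∈ DStarSet (tild Θ) := by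
  refine ⟨x, ?_⟩
  set c := fourierCoeff (tild Θ) 0 x
  filter_upwards [Lp.coeFn_sub (τ (monomialLp 0 x)) (monomialLp (-1) c),
    hτ.coeFn_apply_monomialLp 0 x, coeFn_monomialLp (-1) c] with t hsub hτt hm
  rw [hsub, Pi.sub_apply, hτt, hm, zero_add, map_smul, smul_sub]

theorem IsTau.fourierCoeff_adjoint_apply_zero (hτ : IsTau Θ τ) {f : Lp V 2 haarCircle2pi}
    (hf : MemH2 f) (hfD : ∀ g ∈ DStarSet (tild Θ), ⟪f, g⟫ = (0 : ℂ)) :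
    fourierCoeff (adjoint τ f) 0 = 0 := by
  refine fourierCoeff_eq_zero_of_forall_inner_monomialLp fun x => ?_
  have hD := hfD _ (hτ.apply_monomialLp_zero_sub_mem_dStarSet x)
  have hm : ⟪f, monomialLp (-1) (fourierCoeff (tild Θ) 0 x)⟫ = 0 := by
    rw [inner_eq_zero_symm, inner_monomialLp, hf (-1) (by norm_num), inner_zero_right]
  rw [inner_sub_right, hm, sub_zero] at hD
  rw [adjoint_inner_right, inner_eq_zero_symm, hD]

theorem IsTau.coeFn_apply_of_coeFn_eq_apply (hΘ : IsInner Θ) (hτ : IsTau Θ τ)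
    {v h : Lp V 2 haarCircle2pi} (hv : v =ᵐ[haarCircle2pi] fun t => Θ t (h t)) :
    τ v =ᵐ[haarCircle2pi] fun t => fourier (-1) t • h (-t) := by
  filter_upwards [hτ v, ae_eq_comp_neg hv, ae_comp_neg hΘ.unit] with t hτt hvt hunit
  rw [hτt, hvt]
  exact congrArg _ (DFunLike.congr_fun (Unitary.star_mul_self_of_mem hunit) _)

theorem IsTau.integral_inner_adjoint_apply_eq_zero (hΘ : IsInner Θ) (hτ : IsTau Θ τ)
    {f h : Lp V 2 haarCircle2pi} (hf : MemH2 f) (hh : MemH2 h) :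
    ∫ t, ⟪adjoint τ f t, Θ t (h t)⟫ ∂haarCircle2pi = 0 := by
  let hΘh := hΘ.memLp_apply (Lp.memLp h)
  have hτΘh := hτ.coeFn_apply_of_coeFn_eq_apply hΘ hΘh.coeFn_toLp
  calc ∫ t, ⟪adjoint τ f t, Θ t (h t)⟫ ∂haarCircle2pi
      = ⟪adjoint τ f, hΘh.toLp _⟫ := by
        rw [L2.inner_def]
        refine integral_congr_ae ?_
        filter_upwards [hΘh.coeFn_toLp] with t ht
        rw [ht]
    _ = ⟪f, τ (hΘh.toLp _)⟫ := adjoint_inner_left _ _ _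
    _ = 0 := by
      refine inner_eq_zero_of_fourierCoeff_eq_zero_or fun n => ?_
      rcases lt_or_ge n 0 with hn | hn
      · exact .inl (hf n hn)
      · right
        rw [fourierCoeff_congr_ae hτΘh, fourierCoeff_fourier_smul, fourierCoeff_comp_neg]
        exact hh _ (by omega)

theorem IsTau.memK_adjoint_apply (hΘ : IsInner Θ) (hτ : IsTau Θ τ) {f : Lp V 2 haarCircle2pi}
    (hf : MemK (tild Θ) f) : MemK Θ (adjoint τ f) :=
  ⟨hτ.memH2_adjoint_apply hf, fun _ hh => hτ.integral_inner_adjoint_apply_eq_zero hΘ hf.1 hh⟩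

end Tau

/-- Let `Θ` be inner, `Θ̃(z) = Θ(z̄)*`, and `τ` the unitary operator
`(τ f)(e^{it}) = e^{-it} Θ(e^{-it})* f(e^{-it})`. If `f ∈ K_Θ̃` is orthogonal to
`D̃_* = {(1/z)(Θ̃(z) - Θ̃(0)) x : x ∈ E}`, then `S_Θ S_Θ* (τ* f) = τ* f`,
where `S_Θ` is the compressed shift on `K_Θ`. -/
theorem compShift_compShiftAdj_tau_adj (Θ : Circle2pi → (E →L[ℂ] E)) (hΘ : IsInner Θ)
    (τ : Lp E 2 haarCircle2pi →L[ℂ] Lp E 2 haarCircle2pi) (hτ : IsTau Θ τ)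
    (S A : Lp E 2 haarCircle2pi →L[ℂ] Lp E 2 haarCircle2pi)
    (hS : IsCompShift Θ S) (hA : IsCompShiftAdj Θ S A)
    (f : Lp E 2 haarCircle2pi) (hf : MemK (tild Θ) f)
    (hfD : ∀ g ∈ DStarSet (tild Θ), ⟪f, g⟫ = (0 : ℂ)) :
    S (A (adjoint τ f)) = adjoint τ f :=
  compShift_compShiftAdj_apply_eq_self hΘ hS hA (hτ.memK_adjoint_apply hΘ hf)
    (hτ.fourierCoeff_adjoint_apply_zero hf.1 hfD)
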